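/- arXiv:2605.14457 — 2 statements merged into one kernel-verified Lean document; each statement's English description precedes it below -/
import Mathlib

section
/- (Lemma 2, InsightReplay part.) For any fixed replay distance d₀ ≥ 0, the InsightReplay log-accuracy F_IR(N) := L(N) + N · ln Φ(d₀) attains its maximum over (c, ∞) at a unique point N_IR* ∈ (c, ∞), and N_IR* is characterized as the unique solution in (c, ∞) of the optimality condition g(N) = −ln Φ(d₀). -/
/-!
Writing `t = c / (N - c)`, the derivative of `N ↦ N * log (q * (1 - c / N))` on `(c, ∞)` is
`log q + (t - log (1 + t))`. The map `t ↦ t - log (1 + t)` increases from `0` to `∞` on `[0, ∞)`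
while `t` decreases in `N`, so the derivative `g N + log (Φ d₀)` of `F_IR` is strictly decreasing
and, since `log ((1 - σ) Φ d₀) < 0`, vanishes at exactly one point. A function with antitone
derivative on an open interval is concave there, so its maximisers are exactly its critical points.
-/

open Real Filter Set

theorem strictMonoOn_sub_log_one_add : StrictMonoOn (fun t : ℝ => t - log (1 + t)) (Ici 0) := by
  intro s hs t ht hst
  rw [mem_Ici] at hs
  have hs1 : 0 < 1 + s := by linarith
  have hratio : log ((1 + t) / (1 + s)) < (1 + t) / (1 + s) - 1 :=
    log_lt_sub_one_of_pos (by rw [mem_Ici] at ht; positivity)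
      (by rw [Ne, div_eq_one_iff_eq hs1.ne']; linarith)
  have hle : (1 + t) / (1 + s) - 1 ≤ t - s := by
    rw [div_sub_one hs1.ne', div_le_iff₀ hs1]; nlinarith
  rw [log_div (by linarith) hs1.ne'] at hratio
  simp only
  linarith

theorem tendsto_sub_log_one_add_atTop : Tendsto (fun t : ℝ => t - log (1 + t)) atTop atTop := by
  refine tendsto_atTop_mono' atTop ?_ (tendsto_atTop_add_const_right atTop (-1)
    (tendsto_id.atTop_div_const two_pos))
  filter_upwards [eventually_ge_atTop 0] with t ht
  have h := log_le_sub_one_of_pos (by positivity : 0 < (1 + t) / 2)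
  rw [log_div (by positivity) two_ne_zero] at h
  have := log_two_lt_d9
  simp only [id]
  norm_num at this
  linarith

noncomputable def marginalGain (c N : ℝ) : ℝ := c / (N - c) - log (1 + c / (N - c))

theorem strictAntiOn_marginalGain {c : ℝ} (hc : 0 < c) :
    StrictAntiOn (marginalGain c) (Ioi c) := by
  refine strictMonoOn_sub_log_one_add.comp_strictAntiOn ?_ ?_
  · intro x hx y hy hxy
    simp only [mem_Ioi] at hx hy
    exact div_lt_div_of_pos_left hc (sub_pos.2 hx) (by linarith)
  · intro x hx
    exact (div_pos hc (sub_pos.2 hx)).le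

theorem exists_marginalGain_eq {c y : ℝ} (hc : 0 < c) (hy : 0 < y) :
    ∃ N ∈ Ioi c, marginalGain c N = y := by
  have hcont : ContinuousOn (fun t : ℝ => t - log (1 + t)) (Ici 0) :=
    continuousOn_id.sub (ContinuousOn.log (f := fun t : ℝ => 1 + t) (by fun_prop)
      fun t ht => by linarith [mem_Ici.1 ht])
  obtain ⟨t, ht, hty⟩ : y ∈ (fun t : ℝ => t - log (1 + t)) '' Ici 0 :=
    intermediate_value_Ici hcont tendsto_sub_log_one_add_atTop (by simpa using hy.le)
  have ht0 : 0 < t := by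
    refine lt_of_le_of_ne ht ?_
    rintro rfl
    simp only [add_zero, log_one, sub_zero] at hty
    linarith
  refine ⟨c + c / t, by simp only [mem_Ioi]; have := div_pos hc ht0; linarith, ?_⟩
  have : c / (c + c / t - c) = t := by field_simp; ring
  rw [marginalGain, this]; exact hty

theorem hasDerivAt_mul_log_mul_one_sub_div {q c N : ℝ} (hq : q ≠ 0) (hN : N ≠ 0) (hNc : N ≠ c) :
    HasDerivAt (fun x => x * log (q * (1 - c / x))) (log q + marginalGain c N) N := by
  have hNc' : N - c ≠ 0 := sub_ne_zero.2 hNc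
  have hfrac : 1 - c / N = (N - c) / N := by field_simp
  have hinner : HasDerivAt (fun x => q * (1 - c / x)) (q * (c / N ^ 2)) N :=
    ((((hasDerivAt_const N c).div (hasDerivAt_id' N) hN).const_sub 1).const_mul q).congr_deriv
      (by ring)
  have hpos : q * (1 - c / N) ≠ 0 := by rw [hfrac]; exact mul_ne_zero hq (div_ne_zero hNc' hN)
  refine ((hasDerivAt_id' N).mul (hinner.log hpos)).congr_deriv ?_
  have h1 : 1 + c / (N - c) = ((N - c) / N)⁻¹ := by field_simp; ring
  rw [marginalGain, h1, log_inv, log_mul hq (by rw [hfrac]; exact div_ne_zero hNc' hN), hfrac]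
  field_simp
  ring

theorem ConcaveOn.isMaxOn_of_hasDerivAt_eq_zero {f : ℝ → ℝ} {S : Set ℝ} {x : ℝ}
    (hf : ConcaveOn ℝ S f) (hx : x ∈ interior S) (hfx : HasDerivAt f 0 x) : IsMaxOn f S x := by
  have hmin : IsMinOn (-f) S x :=
    hf.neg.isMinOn_of_rightDeriv_eq_zero hx
      ((hfx.neg.hasDerivWithinAt.derivWithin (uniqueDiffWithinAt_Ioi x)).trans neg_zero)
  exact fun y hy => show f y ≤ f x from neg_le_neg_iff.1 (hmin hy)

theorem isMaxOn_iff_hasDerivAt_eq_zero {f f' : ℝ → ℝ} {S : Set ℝ} (hSo : IsOpen S)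
    (hSc : Convex ℝ S) (hf : ∀ x ∈ S, HasDerivAt f (f' x) x) (hf' : AntitoneOn f' S) {x : ℝ}
    (hx : x ∈ S) : IsMaxOn f S x ↔ f' x = 0 := by
  refine ⟨fun hmax => (hmax.isLocalMax (hSo.mem_nhds hx)).hasDerivAt_eq_zero (hf x hx),
    fun h0 => ?_⟩
  have hderiv : EqOn f' (deriv f) S := fun y hy => (hf y hy).deriv.symm
  rw [← hSo.interior_eq] at hderiv hf' hx
  have hconc : ConcaveOn ℝ S f :=
    (hf'.congr hderiv).concaveOn_of_deriv hSc
      (fun y hy => (hf y hy).continuousAt.continuousWithinAt)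
      (fun y hy => (hf y (interior_subset hy)).differentiableAt.differentiableWithinAt)
  exact hconc.isMaxOn_of_hasDerivAt_eq_zero hx (h0 ▸ hf x (interior_subset hx))

theorem stmt_9_general (σ T M c : ℝ)
    (hσ0 : 0 < σ) (hσ1 : σ < 1) (hT : 0 < T) (hM : 0 < M)
    (hc : c = T / M)
    (L g : ℝ → ℝ)
    (hL : ∀ N : ℝ, L N = N * Real.log ((1 - σ) * (1 - c / N)))
    (hg : ∀ N : ℝ, g N = deriv L N)
    (Φ : ℝ → ℝ)
    (hΦpos : ∀ x : ℝ, 0 ≤ x → 0 < Φ x)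
    (hΦle : ∀ x : ℝ, 0 ≤ x → Φ x ≤ 1)
    (d₀ : ℝ) (hd₀ : 0 ≤ d₀)
    (FIR : ℝ → ℝ)
    (hFIR : ∀ N : ℝ, FIR N = L N + N * Real.log (Φ d₀)) :
    ∃ Nstar : ℝ, Nstar ∈ Set.Ioi c ∧
      IsMaxOn FIR (Set.Ioi c) Nstar ∧
      (∀ N : ℝ, N ∈ Set.Ioi c → IsMaxOn FIR (Set.Ioi c) N → N = Nstar) ∧
      (∀ N : ℝ, N ∈ Set.Ioi c → (g N = -Real.log (Φ d₀) ↔ N = Nstar)) := by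
  have hc0 : 0 < c := hc ▸ div_pos hT hM
  have hL' : ∀ N ∈ Ioi c, HasDerivAt L (log (1 - σ) + marginalGain c N) N := fun N hN =>
    funext hL ▸ hasDerivAt_mul_log_mul_one_sub_div (by linarith) (hc0.trans hN).ne' hN.ne'
  have hg' : EqOn g (fun N => log (1 - σ) + marginalGain c N) (Ioi c) := fun N hN =>
    (hg N).trans (hL' N hN).deriv
  have hFIR' : ∀ N ∈ Ioi c, HasDerivAt FIR (g N + log (Φ d₀)) N := by
    intro N hN
    rw [funext hFIR, hg' hN]
    exact ((hL' N hN).add ((hasDerivAt_id' N).mul_const _)).congr_deriv (by ring)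
  have hanti : StrictAntiOn g (Ioi c) :=
    ((strictAntiOn_marginalGain hc0).const_add _).congr hg'.symm
  have hmax : ∀ N ∈ Ioi c, IsMaxOn FIR (Ioi c) N ↔ g N = -log (Φ d₀) := fun N hN =>
    (isMaxOn_iff_hasDerivAt_eq_zero isOpen_Ioi (convex_Ioi c) hFIR'
      (hanti.antitoneOn.add_const _) hN).trans add_eq_zero_iff_eq_neg
  obtain ⟨Nstar, hNstar, hgNstar⟩ : ∃ N ∈ Ioi c, g N = -log (Φ d₀) := by
    have hσlog : log (1 - σ) < 0 := log_neg (by linarith) (by linarith)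
    have hΦlog : log (Φ d₀) ≤ 0 := log_nonpos (hΦpos d₀ hd₀).le (hΦle d₀ hd₀)
    obtain ⟨N, hN, hgain⟩ :=
      exists_marginalGain_eq hc0 (by linarith : 0 < -log (1 - σ) - log (Φ d₀))
    exact ⟨N, hN, by simp only [hg' hN, hgain]; ring⟩
  have hinj : ∀ N ∈ Ioi c, g N = -log (Φ d₀) ↔ N = Nstar := fun N hN =>
    ⟨fun h => hanti.injOn hN hNstar (h.trans hgNstar.symm), fun h => h ▸ hgNstar⟩
  exact ⟨Nstar, hNstar, (hmax Nstar hNstar).2 hgNstar,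
    fun N hN h => (hinj N hN).1 ((hmax N hN).1 h), hinj⟩

/-- Lemma 2, InsightReplay part: For any fixed replay distance
`d₀ ≥ 0`, the InsightReplay log-accuracy `F_IR N = L N + N * ln (Φ d₀)` attains
its maximum over `(c, ∞)` at a unique point `N_IR* ∈ (c, ∞)`, and `N_IR*` is
the unique solution in `(c, ∞)` of the optimality condition
`g N = -ln (Φ d₀)`. -/
theorem stmt_9 (σ T M c : ℝ)
    (hσ0 : 0 < σ) (hσ1 : σ < 1) (hT : 0 < T) (hM : 0 < M)
    (hc : c = T / M)
    (L g : ℝ → ℝ)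
    (hL : ∀ N : ℝ, L N = N * Real.log ((1 - σ) * (1 - c / N)))
    (hg : ∀ N : ℝ, g N = deriv L N)
    (Φ : ℝ → ℝ)
    (hΦcont : ContinuousOn Φ (Set.Ici 0))
    (hΦpos : ∀ x : ℝ, 0 ≤ x → 0 < Φ x)
    (hΦle : ∀ x : ℝ, 0 ≤ x → Φ x ≤ 1)
    (hΦ0 : Φ 0 = 1)
    (hΦanti : StrictAntiOn Φ (Set.Ici 0))
    (hΦlim : Filter.Tendsto Φ Filter.atTop (nhds 0))
    (d₀ : ℝ) (hd₀ : 0 ≤ d₀)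
    (FIR : ℝ → ℝ)
    (hFIR : ∀ N : ℝ, FIR N = L N + N * Real.log (Φ d₀)) :
    ∃ Nstar : ℝ, Nstar ∈ Set.Ioi c ∧
      IsMaxOn FIR (Set.Ioi c) Nstar ∧
      (∀ N : ℝ, N ∈ Set.Ioi c → IsMaxOn FIR (Set.Ioi c) N → N = Nstar) ∧
      (∀ N : ℝ, N ∈ Set.Ioi c → (g N = -Real.log (Φ d₀) ↔ N = Nstar)) :=
  stmt_9_general σ T M c hσ0 hσ1 hT hM hc L g hL hg Φ hΦpos hΦle d₀ hd₀ FIR hFIR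
end

section
/- (Theorem 1: InsightReplay shifts the optimal length rightward.) Let N_Φ* ∈ (c, ∞) be the unique maximizer of F_Φ and let N_IR* ∈ (c, ∞) be the unique maximizer of F_IR for a replay distance d₀ ≥ 0. If Φ(d₀) > Φ(N_Φ*) — in particular, whenever 0 ≤ d₀ < N_Φ* — then N_IR* > N_Φ*. -/
/-!
At an interior maximum both objectives are critical. Writing `g = L'`, this says
`g N_Φ* = -ln Φ(N_Φ*)` for `F_Φ` (fundamental theorem of calculus) and `g N_IR* = -ln Φ(d₀)` for
`F_IR`. The hypothesis `Φ(d₀) > Φ(N_Φ*)` therefore gives `g N_IR* < g N_Φ*`, and `g` is strictly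
decreasing on `(c, ∞)` because `g' N = -c² / (N (N - c)²)`.
-/

open Real Set

/-- The paper's `g`, with `a = 1 - σ`. -/
noncomputable def logAccuracySlope (a c N : ℝ) : ℝ :=
  Real.log (a * (1 - c / N)) + c / (N - c)

theorem hasDerivAt_log_accuracy {a c x : ℝ} (ha : a ≠ 0) (hx : x ≠ 0) (hxc : x ≠ c) :
    HasDerivAt (fun N => Real.log (a * (1 - c / N))) (c / (x * (x - c))) x := by
  have hxc' : x - c ≠ 0 := sub_ne_zero.mpr hxc
  have hp : a * (1 - c / x) ≠ 0 := by
    refine mul_ne_zero ha ?_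
    rw [one_sub_div hx]; exact div_ne_zero hxc' hx
  have hinner : HasDerivAt (fun N => a * (1 - c / N)) (a * (c / x ^ 2)) x := by
    simpa only [div_eq_mul_inv, mul_neg, neg_neg, sub_neg_eq_add] using
      (((hasDerivAt_inv hx).const_mul c).const_sub 1).const_mul a
  refine (hinner.log hp).congr_deriv ?_
  field_simp

theorem hasDerivAt_mul_log_accuracy {a c x : ℝ} (ha : a ≠ 0) (hx : x ≠ 0) (hxc : x ≠ c) :
    HasDerivAt (fun N => N * Real.log (a * (1 - c / N))) (logAccuracySlope a c x) x := by
  refine ((hasDerivAt_id x).mul (hasDerivAt_log_accuracy ha hx hxc)).congr_deriv ?_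
  have hxc' : x - c ≠ 0 := sub_ne_zero.mpr hxc
  simp only [logAccuracySlope, id_eq, one_mul]
  field_simp

theorem hasDerivAt_logAccuracySlope {a c x : ℝ} (ha : a ≠ 0) (hx : x ≠ 0) (hxc : x ≠ c) :
    HasDerivAt (logAccuracySlope a c) (-(c ^ 2 / (x * (x - c) ^ 2))) x := by
  have hxc' : x - c ≠ 0 := sub_ne_zero.mpr hxc
  refine ((hasDerivAt_log_accuracy ha hx hxc).add
    (((hasDerivAt_id x).sub_const c).inv hxc' |>.const_mul c)).congr_deriv ?_
  simp only [id_eq]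
  field_simp
  ring

theorem strictAntiOn_logAccuracySlope {a c : ℝ} (ha : a ≠ 0) (hc : 0 < c) :
    StrictAntiOn (logAccuracySlope a c) (Ioi c) := by
  have hderiv : ∀ x ∈ Ioi c, HasDerivAt (logAccuracySlope a c) (-(c ^ 2 / (x * (x - c) ^ 2))) x :=
    fun x hx => hasDerivAt_logAccuracySlope ha (hc.trans hx).ne' (ne_of_gt hx)
  refine strictAntiOn_of_deriv_neg (convex_Ioi c)
    (fun x hx => (hderiv x hx).continuousAt.continuousWithinAt) fun x hx => ?_
  rw [interior_Ioi] at hx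
  have hxc : 0 < x - c := sub_pos.mpr hx
  have hx0 : 0 < x := hc.trans hx
  rw [(hderiv x hx).deriv, neg_lt_zero]
  positivity

theorem hasDerivAt_integral_of_continuousOn_Ioi {f : ℝ → ℝ} {p a b : ℝ}
    (hf : ContinuousOn f (Ioi p)) (ha : p < a) (hb : p < b) :
    HasDerivAt (fun u => ∫ x in a..u, f x) (f b) b :=
  intervalIntegral.integral_hasDerivAt_right
    ((hf.mono fun _ hx => (lt_min ha hb).trans_le hx.1).intervalIntegrable)
    (hf.stronglyMeasurableAtFilter isOpen_Ioi b hb)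
    (hf.continuousAt (isOpen_Ioi.mem_nhds hb))

theorem stmt_10_general (σ T M c : ℝ)
    (hσ1 : σ < 1) (hT : 0 < T) (hM : 0 < M)
    (hc : c = T / M)
    (L : ℝ → ℝ)
    (hL : ∀ N : ℝ, L N = N * Real.log ((1 - σ) * (1 - c / N)))
    (Φ : ℝ → ℝ)
    (hΦcont : ContinuousOn Φ (Set.Ici 0))
    (hΦpos : ∀ x : ℝ, 0 ≤ x → 0 < Φ x)
    (d₀ : ℝ)
    (FΦ FIR : ℝ → ℝ)
    (hFΦ : ∀ N : ℝ, FΦ N = L N + ∫ x in (1:ℝ)..N, Real.log (Φ x))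
    (hFIR : ∀ N : ℝ, FIR N = L N + N * Real.log (Φ d₀))
    (NΦ NIR : ℝ)
    (hNΦmem : NΦ ∈ Set.Ioi c)
    (hNΦmax : IsMaxOn FΦ (Set.Ioi c) NΦ)
    (hNIRmem : NIR ∈ Set.Ioi c)
    (hNIRmax : IsMaxOn FIR (Set.Ioi c) NIR)
    (hdom : Φ d₀ > Φ NΦ) :
    NIR > NΦ := by
  have hc0 : 0 < c := hc ▸ div_pos hT hM
  have ha : 1 - σ ≠ 0 := (sub_pos.mpr hσ1).ne'
  have hNΦ0 : 0 < NΦ := hc0.trans hNΦmem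
  have hL' (N : ℝ) (hN : N ∈ Ioi c) : HasDerivAt L (logAccuracySlope (1 - σ) c N) N := by
    rw [funext hL]
    exact hasDerivAt_mul_log_accuracy ha (hc0.trans hN).ne' (ne_of_gt hN)
  have hlogΦ : ContinuousOn (fun x => Real.log (Φ x)) (Ioi 0) :=
    (hΦcont.mono Ioi_subset_Ici_self).log fun x hx => (hΦpos x hx.le).ne'
  have hcritΦ : logAccuracySlope (1 - σ) c NΦ + Real.log (Φ NΦ) = 0 := by
    refine (hNΦmax.isLocalMax (isOpen_Ioi.mem_nhds hNΦmem)).hasDerivAt_eq_zero ?_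
    rw [funext hFΦ]
    exact (hL' NΦ hNΦmem).add (hasDerivAt_integral_of_continuousOn_Ioi hlogΦ one_pos hNΦ0)
  have hcritIR : logAccuracySlope (1 - σ) c NIR + Real.log (Φ d₀) = 0 := by
    refine (hNIRmax.isLocalMax (isOpen_Ioi.mem_nhds hNIRmem)).hasDerivAt_eq_zero ?_
    rw [funext hFIR]
    exact (hL' NIR hNIRmem).add (hasDerivAt_mul_const _)
  have hlog : Real.log (Φ NΦ) < Real.log (Φ d₀) := log_lt_log (hΦpos NΦ hNΦ0.le) hdom
  exact ((strictAntiOn_logAccuracySlope ha hc0).lt_iff_gt hNIRmem hNΦmem).mp (by linarith)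

/-- Theorem 1: InsightReplay shifts the optimal length
rightward: Let `N_Φ* ∈ (c, ∞)` be the unique maximizer of
`F_Φ N = L N + ∫_1^N ln (Φ x) dx` over `(c, ∞)` and `N_IR* ∈ (c, ∞)` the
unique maximizer of `F_IR N = L N + N * ln (Φ d₀)` over `(c, ∞)`, for a replay
distance `d₀ ≥ 0`. If `Φ d₀ > Φ N_Φ*` (in particular whenever
`0 ≤ d₀ < N_Φ*`), then `N_IR* > N_Φ*`. -/
theorem stmt_10 (σ T M c : ℝ)
    (hσ0 : 0 < σ) (hσ1 : σ < 1) (hT : 0 < T) (hM : 0 < M)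
    (hc : c = T / M)
    (L : ℝ → ℝ)
    (hL : ∀ N : ℝ, L N = N * Real.log ((1 - σ) * (1 - c / N)))
    (Φ : ℝ → ℝ)
    (hΦcont : ContinuousOn Φ (Set.Ici 0))
    (hΦpos : ∀ x : ℝ, 0 ≤ x → 0 < Φ x)
    (hΦle : ∀ x : ℝ, 0 ≤ x → Φ x ≤ 1)
    (hΦ0 : Φ 0 = 1)
    (hΦanti : StrictAntiOn Φ (Set.Ici 0))
    (hΦlim : Filter.Tendsto Φ Filter.atTop (nhds 0))
    (d₀ : ℝ) (hd₀ : 0 ≤ d₀)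
    (FΦ FIR : ℝ → ℝ)
    (hFΦ : ∀ N : ℝ, FΦ N = L N + ∫ x in (1:ℝ)..N, Real.log (Φ x))
    (hFIR : ∀ N : ℝ, FIR N = L N + N * Real.log (Φ d₀))
    (NΦ NIR : ℝ)
    (hNΦmem : NΦ ∈ Set.Ioi c)
    (hNΦmax : IsMaxOn FΦ (Set.Ioi c) NΦ)
    (hNΦuniq : ∀ N : ℝ, N ∈ Set.Ioi c → IsMaxOn FΦ (Set.Ioi c) N → N = NΦ)
    (hNIRmem : NIR ∈ Set.Ioi c)
    (hNIRmax : IsMaxOn FIR (Set.Ioi c) NIR)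
    (hNIRuniq : ∀ N : ℝ, N ∈ Set.Ioi c → IsMaxOn FIR (Set.Ioi c) N → N = NIR)
    (hdom : Φ d₀ > Φ NΦ) :
    NIR > NΦ :=
  stmt_10_general σ T M c hσ1 hT hM hc L hL Φ hΦcont hΦpos d₀ FΦ FIR hFΦ hFIR NΦ NIR hNΦmem hNΦmax
    hNIRmem hNIRmax hdom
end
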